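/- arXiv:2104.01079 — 5 statements merged into one kernel-verified Lean document; each statement's English description precedes it below -/
import Mathlib

section
/- Let p be a prime and k ≥ 1. In the quotient ring ℚ[x₁,…,x_k]/(Φ_p(x₁), x₁ − x₂^p, x₂ − x₃^p, …, x_{k−1} − x_k^p), the resulting ℚ-algebra is isomorphic to the cyclotomic field ℚ(ζ_{p^k}). -/
/-!
With the variables named `x₀, …, xₙ`, the relations eliminate all of them in favour of the
last one, `x := xₙ`: in the quotient
`xᵢ = x ^ p ^ (n - i)`, so the quotient is `ℚ[x] / (Φ_p(x ^ p ^ n))`. Since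
`Φ_p(x ^ p ^ n) = Φ_{p ^ (n + 1)}(x)` is irreducible over `ℚ`, this is the cyclotomic field.
-/

open scoped Polynomial

theorem Polynomial.cyclotomic_prime_pow_succ_eq_expand (R : Type*) [CommRing R] {p : ℕ}
    (hp : p.Prime) (n : ℕ) :
    cyclotomic (p ^ (n + 1)) R = expand R (p ^ n) (cyclotomic p R) := by
  have := Fact.mk hp
  simp only [cyclotomic_prime_pow_eq_geom_sum hp, cyclotomic_prime, map_sum, map_pow, expand_X]

namespace MvPolynomial

variable {R : Type*} [CommRing R] (f : R[X]) (p n : ℕ)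

noncomputable def rootTowerIdeal : Ideal (MvPolynomial (Fin (n + 1)) R) :=
  Ideal.span ({Polynomial.aeval (X 0) f} ∪
    {g | ∃ (i : ℕ) (h : i + 1 < n + 1), g = X ⟨i, Nat.lt_of_succ_lt h⟩ - X ⟨i + 1, h⟩ ^ p})

theorem mk_aeval_X_zero :
    Ideal.Quotient.mk (rootTowerIdeal f p n) (Polynomial.aeval (X 0) f) = 0 :=
  Ideal.Quotient.eq_zero_iff_mem.2 (Ideal.subset_span (Or.inl rfl))

theorem mk_X_castSucc (i : Fin n) :
    Ideal.Quotient.mk (rootTowerIdeal f p n) (X i.castSucc) =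
      Ideal.Quotient.mk (rootTowerIdeal f p n) (X i.succ) ^ p := by
  rw [← map_pow, Ideal.Quotient.mk_eq_mk_iff_sub_mem]
  exact Ideal.subset_span (Or.inr ⟨i, by omega, rfl⟩)

theorem mk_X_eq_mk_X_last_pow (i : Fin (n + 1)) :
    Ideal.Quotient.mk (rootTowerIdeal f p n) (X i) =
      Ideal.Quotient.mk (rootTowerIdeal f p n) (X (Fin.last n)) ^ p ^ (n - i) := by
  induction i using Fin.reverseInduction with
  | last => simp
  | cast i ih =>
    rw [mk_X_castSucc, ih, ← pow_mul, ← pow_succ, Fin.val_succ, Fin.val_castSucc]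
    congr 2
    omega

theorem aeval_mk_X_last_expand :
    Polynomial.aeval (Ideal.Quotient.mk (rootTowerIdeal f p n) (X (Fin.last n)))
      (Polynomial.expand R (p ^ n) f) = 0 := by
  have h_zero := mk_X_eq_mk_X_last_pow f p n 0
  rw [Fin.val_zero, Nat.sub_zero] at h_zero
  rw [Polynomial.expand_aeval, ← h_zero, ← Ideal.Quotient.mkₐ_eq_mk R,
    Polynomial.aeval_algHom_apply, Ideal.Quotient.mkₐ_eq_mk, mk_aeval_X_zero]

theorem rootTowerIdeal_le_ker_aeval :
    rootTowerIdeal f p n ≤ RingHom.ker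
      (aeval fun i : Fin (n + 1) ↦ AdjoinRoot.root (Polynomial.expand R (p ^ n) f) ^ p ^ (n - i)) := by
  refine Ideal.span_le.2 ?_
  rintro g (rfl | ⟨i, hi, rfl⟩)
  · rw [SetLike.mem_coe, RingHom.mem_ker, ← Polynomial.aeval_algHom_apply, aeval_X,
      Fin.val_zero, Nat.sub_zero, ← Polynomial.expand_aeval, AdjoinRoot.aeval_eq,
      AdjoinRoot.mk_self]
  · rw [SetLike.mem_coe, RingHom.mem_ker, map_sub, map_pow, aeval_X, aeval_X, ← pow_mul,
      ← pow_succ, sub_eq_zero]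
    congr 2
    dsimp only
    omega

noncomputable def quotientRootTowerIdealEquiv :
    (MvPolynomial (Fin (n + 1)) R ⧸ rootTowerIdeal f p n) ≃ₐ[R]
      AdjoinRoot (Polynomial.expand R (p ^ n) f) :=
  AlgEquiv.ofAlgHom
    (Ideal.Quotient.liftₐ _ _ fun _ ha ↦ RingHom.mem_ker.1 (rootTowerIdeal_le_ker_aeval f p n ha))
    (AdjoinRoot.liftAlgHom _ (Algebra.ofId R _)
      (Ideal.Quotient.mk (rootTowerIdeal f p n) (X (Fin.last n))) (by
        rw [Algebra.toRingHom_ofId, ← Polynomial.aeval_def, aeval_mk_X_last_expand]))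
    (AdjoinRoot.algHom_ext <| by
      rw [AlgHom.comp_apply, AdjoinRoot.liftAlgHom_root, ← Ideal.Quotient.mkₐ_eq_mk R,
        ← AlgHom.comp_apply, Ideal.Quotient.liftₐ_comp]
      simp)
    (Ideal.Quotient.algHom_ext R <| by
      rw [AlgHom.comp_assoc, Ideal.Quotient.liftₐ_comp]
      refine MvPolynomial.algHom_ext fun i ↦ ?_
      simp [mk_X_eq_mk_X_last_pow f p n i])

end MvPolynomial

noncomputable def IsCyclotomicExtension.adjoinRootCyclotomicEquiv (n : ℕ) [NeZero n]
    (K L : Type*) [Field K] [CommRing L] [IsDomain L] [Algebra K L]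
    [IsCyclotomicExtension {n} K L] [NeZero (n : K)]
    (hirr : Irreducible (Polynomial.cyclotomic n K)) :
    AdjoinRoot (Polynomial.cyclotomic n K) ≃ₐ[K] L :=
  have hmin := (zeta_spec n K L).minpoly_eq_cyclotomic_of_irreducible hirr
  AdjoinRoot.equiv' _ ((zeta_spec n K L).powerBasis K)
    (by rw [IsPrimitiveRoot.powerBasis_gen, ← hmin, AdjoinRoot.aeval_eq, AdjoinRoot.mk_self])
    (by rw [IsPrimitiveRoot.powerBasis_gen, hmin, minpoly.aeval])

open MvPolynomial in
/-- For a prime `p` and `k ≥ 1`, the quotient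
`ℚ[x₁,…,x_k]/(Φ_p(x₁), x₁ − x₂^p, …, x_{k−1} − x_k^p)` is isomorphic as a `ℚ`-algebra
to the cyclotomic field `ℚ(ζ_{p^k})`.  (Variables are indexed zero-based by `Fin k`.) -/
theorem quotient_relations_iso_cyclotomicField (p k : ℕ) (hp : p.Prime) (hk : 1 ≤ k) :
    Nonempty ((MvPolynomial (Fin k) ℚ ⧸
        Ideal.span ({Polynomial.aeval (X (⟨0, hk⟩ : Fin k)) (Polynomial.cyclotomic p ℚ)} ∪
          {f | ∃ (i : ℕ) (h : i + 1 < k),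
            f = X (⟨i, Nat.lt_of_succ_lt h⟩ : Fin k) - X (⟨i + 1, h⟩ : Fin k) ^ p} :
            Set (MvPolynomial (Fin k) ℚ))) ≃ₐ[ℚ]
      (haveI : NeZero (p ^ k) := ⟨(pow_pos hp.pos k).ne'⟩; CyclotomicField (p ^ k) ℚ)) := by
  obtain ⟨n, rfl⟩ := Nat.exists_eq_add_of_le' hk
  have : NeZero (p ^ (n + 1)) := ⟨(pow_pos hp.pos _).ne'⟩
  -- the `IsCyclotomicExtension` instance of `CyclotomicField` is stated for this algebra
  -- structure, not for `DivisionRing.toRatAlgebra`, which instance search would pick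
  let := CyclotomicField.algebra (p ^ (n + 1)) ℚ
  have := CyclotomicField.isCyclotomicExtension (p ^ (n + 1)) ℚ
  let toCyclotomicField := IsCyclotomicExtension.adjoinRootCyclotomicEquiv (p ^ (n + 1)) ℚ
    (CyclotomicField (p ^ (n + 1)) ℚ) (Polynomial.cyclotomic.irreducible_rat (pow_pos hp.pos _))
  exact ⟨(quotientRootTowerIdealEquiv _ p n).trans <|
    (AdjoinRoot.algEquivOfEq ℚ _ _
      (Polynomial.cyclotomic_prime_pow_succ_eq_expand ℚ hp n).symm).trans toCyclotomicField⟩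
end

section
/- Let m and n be coprime positive integers. Then the tensor product ℚ(ζ_m) ⊗_ℚ ℚ(ζ_n) is isomorphic as a ℚ-algebra to ℚ(ζ_{mn}). -/
/-!
If `ζ` is a primitive `mn`-th root of unity in `ℚ(ζ_{mn})`, then `ζⁿ` and `ζᵐ` are primitive `m`-th and
`n`-th roots, so `ζ_m ↦ ζⁿ`, `ζ_n ↦ ζᵐ` defines an algebra map `ℚ(ζ_m) ⊗ ℚ(ζ_n) → ℚ(ζ_{mn})`. Its
image contains `ζⁿ ζᵐ`, again a primitive `mn`-th root since `m` and `n` are coprime, so it is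
surjective; both sides have dimension `φ(m) φ(n) = φ(mn)`, so it is bijective.
-/

open Polynomial IsCyclotomicExtension
open scoped TensorProduct

theorem IsPrimitiveRoot.mul_of_coprime {M : Type*} [CommMonoid M] {x y : M} {k l : ℕ}
    (hx : IsPrimitiveRoot x k) (hy : IsPrimitiveRoot y l) (h : k.Coprime l) :
    IsPrimitiveRoot (x * y) (k * l) := by
  rw [hx.eq_orderOf, hy.eq_orderOf] at h ⊢
  rw [IsPrimitiveRoot.iff_orderOf, (Commute.all x y).orderOf_mul_eq_mul_orderOf_of_coprime h]

theorem IsPrimitiveRoot.exists_algHom_apply_eq {F L C : Type*} [Field F] [CommRing L] [IsDomain L]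
    [Algebra F L] [CommRing C] [IsDomain C] [Algebra F C] {n : ℕ} [NeZero n]
    [IsCyclotomicExtension {n} F L] {ζ : L} (hζ : IsPrimitiveRoot ζ n)
    (hirr : Irreducible (cyclotomic n F)) {ξ : C} (hξ : IsPrimitiveRoot ξ n) :
    ∃ φ : L →ₐ[F] C, φ ζ = ξ :=
  ⟨(hζ.embeddingsEquivPrimitiveRoots C hirr).symm ⟨ξ, (mem_primitiveRoots (NeZero.pos n)).2 hξ⟩,
    congrArg Subtype.val ((hζ.embeddingsEquivPrimitiveRoots C hirr).apply_symm_apply _)⟩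

theorem IsCyclotomicExtension.algHom_surjective_of_isPrimitiveRoot_mem_range {F A L : Type*}
    [CommRing F] [Semiring A] [Algebra F A] [CommRing L] [IsDomain L] [Algebra F L] {n : ℕ}
    [NeZero n] [IsCyclotomicExtension {n} F L] (f : A →ₐ[F] L) {ζ : L}
    (hζ : IsPrimitiveRoot ζ n) (hmem : ζ ∈ f.range) : Function.Surjective f := by
  rw [← AlgHom.range_eq_top, eq_top_iff, ← adjoin_primitive_root_eq_top hζ]
  exact Algebra.adjoin_le (Set.singleton_subset_iff.2 hmem)

theorem IsCyclotomicExtension.nonempty_tensorProduct_algEquiv {F L₁ L₂ L : Type*} [Field F]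
    [Field L₁] [Field L₂] [Field L] [Algebra F L₁] [Algebra F L₂] [Algebra F L] {m n : ℕ}
    [NeZero m] [NeZero n] [IsCyclotomicExtension {m} F L₁] [IsCyclotomicExtension {n} F L₂]
    [IsCyclotomicExtension {m * n} F L] (h : m.Coprime n) (hirr₁ : Irreducible (cyclotomic m F))
    (hirr₂ : Irreducible (cyclotomic n F)) (hirr : Irreducible (cyclotomic (m * n) F)) :
    Nonempty (L₁ ⊗[F] L₂ ≃ₐ[F] L) := by
  have hζ := zeta_spec (m * n) F L
  have hζn : IsPrimitiveRoot (zeta (m * n) F L ^ n) m := hζ.pow (NeZero.pos _) (mul_comm m n)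
  have hζm : IsPrimitiveRoot (zeta (m * n) F L ^ m) n := hζ.pow (NeZero.pos _) rfl
  obtain ⟨φ₁, hφ₁⟩ := (zeta_spec m F L₁).exists_algHom_apply_eq hirr₁ hζn
  obtain ⟨φ₂, hφ₂⟩ := (zeta_spec n F L₂).exists_algHom_apply_eq hirr₂ hζm
  let f := Algebra.TensorProduct.productMap φ₁ φ₂
  have hsurj : Function.Surjective f := by
    refine algHom_surjective_of_isPrimitiveRoot_mem_range f (hζn.mul_of_coprime hζm h)
      ⟨zeta m F L₁ ⊗ₜ zeta n F L₂, ?_⟩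
    simp [f, hφ₁, hφ₂]
  have := finiteDimensional {m} F L₁
  have := finiteDimensional {n} F L₂
  have := finiteDimensional {m * n} F L
  have hrank : Module.finrank F (L₁ ⊗[F] L₂) = Module.finrank F L := by
    rw [Module.finrank_tensorProduct, IsCyclotomicExtension.finrank L₁ hirr₁,
      IsCyclotomicExtension.finrank L₂ hirr₂, IsCyclotomicExtension.finrank L hirr,
      Nat.totient_mul h]
  exact ⟨AlgEquiv.ofBijective f
    ⟨(LinearMap.injective_iff_surjective_of_finrank_eq_finrank (f := f.toLinearMap) hrank).2 hsurj,
      hsurj⟩⟩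

/-- For coprime positive integers `m` and `n`, the tensor product
`ℚ(ζ_m) ⊗_ℚ ℚ(ζ_n)` is isomorphic as a `ℚ`-algebra to `ℚ(ζ_{mn})`. -/
theorem tensor_cyclotomicField_iso (m n : ℕ) (hm : 0 < m) (hn : 0 < n)
    (h : Nat.Coprime m n) :
    Nonempty ((CyclotomicField m ℚ ⊗[ℚ] CyclotomicField n ℚ) ≃ₐ[ℚ]
      CyclotomicField (m * n) ℚ) := by
  have := NeZero.of_pos hm
  have := NeZero.of_pos hn
  -- instance search finds `DivisionRing.toRatAlgebra`, which is not reducibly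
  -- `CyclotomicField.algebra`, so the `IsCyclotomicExtension` instance must be supplied by hand
  have (k : ℕ) : IsCyclotomicExtension {k} ℚ (CyclotomicField k ℚ) :=
    CyclotomicField.instIsCyclotomicExtensionSingletonNatSetOfCharZero k ℚ
  exact nonempty_tensorProduct_algEquiv h (cyclotomic.irreducible_rat hm)
    (cyclotomic.irreducible_rat hn) (cyclotomic.irreducible_rat (Nat.mul_pos hm hn))
end

section
/- Consider the CDGA D over ℚ given by ℚ[γ, γ̄] ⊗ E(y) with |γ| = 2, |γ̄| = −2, |y| = 1, and differential d(y) = γγ̄ − 1 (and d(γ) = d(γ̄) = 0). Then the homology of D is isomorphic as a graded ℚ-algebra to the Laurent polynomial ring ℚ[β, β⁻¹] with |β| = 2, where β is the class of γ. -/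
/-!
Since `p = γγ̄ - 1` is a non-zero-divisor, `d (r + s y) = s p` vanishes exactly on the even part
and has image the ideal `(p)`, so the homology is `ℚ[γ, γ̄]/(p)`. There `γ` is a unit with inverse
`γ̄`, so `γ ↦ T`, `γ̄ ↦ T⁻¹` and `T ↦ γ` give mutually inverse algebra maps with `ℚ[T, T⁻¹]`:
both composites fix the generators.
-/

open MvPolynomial LaurentPolynomial DualNumber TrivSqZeroExt
open scoped nonZeroDivisors

namespace DualNumber

variable {R : Type*} [CommRing R]

/-- The differential of `R ⊗ E(y)` with `d y = p`, on `R[ε]` with `ε` playing the role of `y`. -/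
def koszulDiff (p : R) (x : R[ε]) : R[ε] :=
  inl (x.snd * p)

theorem koszulDiff_eq_zero_iff {p : R} (hp : p ∈ R⁰) (x : R[ε]) :
    koszulDiff p x = 0 ↔ x.snd = 0 := by
  rw [koszulDiff, ← inl_zero, inl_injective.eq_iff, mul_right_mem_nonZeroDivisors_eq_zero_iff hp]

theorem exists_koszulDiff_eq_iff (p : R) (x : R[ε]) :
    (∃ b, koszulDiff p b = x) ↔ x.snd = 0 ∧ x.fst ∈ Ideal.span {p} := by
  rw [Ideal.mem_span_singleton']
  constructor
  · rintro ⟨b, rfl⟩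
    exact ⟨snd_inl _ _, b.snd, rfl⟩
  · rintro ⟨hsnd, c, hc⟩
    exact ⟨inr c, ext hc hsnd.symm⟩

end DualNumber

namespace LaurentPolynomial

variable {R A : Type*} [CommSemiring R] [Semiring A] [Algebra R A]

theorem algHom_ext {f g : R[T;T⁻¹] →ₐ[R] A} (h : f (T 1) = g (T 1)) : f = g :=
  (AddMonoidAlgebra.lift R A ℤ).symm.injective (MonoidHom.ext_mint h)

end LaurentPolynomial

namespace MvPolynomial

variable (R : Type*) [CommRing R]

local notation "I" => Ideal.span {(X 0 * X 1 - 1 : MvPolynomial (Fin 2) R)}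

theorem mk_X_zero_mul_mk_X_one :
    Ideal.Quotient.mk I (X 0) * Ideal.Quotient.mk I (X 1) = 1 := by
  rw [← map_mul, ← map_one (Ideal.Quotient.mk _), Ideal.Quotient.mk_eq_mk_iff_sub_mem]
  exact Ideal.mem_span_singleton_self _

noncomputable def quotientToLaurent : MvPolynomial (Fin 2) R ⧸ I →ₐ[R] R[T;T⁻¹] :=
  Ideal.Quotient.liftₐ _ (aeval ![T 1, T (-1)]) fun a ha => by
    obtain ⟨c, rfl⟩ := Ideal.mem_span_singleton'.mp ha
    rw [map_mul, map_sub, map_mul, aeval_X, aeval_X, map_one]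
    simp only [Matrix.cons_val_zero, Matrix.cons_val_one]
    rw [← T_add, add_neg_cancel, T_zero, sub_self, mul_zero]

noncomputable def laurentToQuotient : R[T;T⁻¹] →ₐ[R] MvPolynomial (Fin 2) R ⧸ I :=
  AddMonoidAlgebra.lift R _ ℤ <| (Units.coeHom _).comp <|
    zpowersHom _
      ⟨_, _, mk_X_zero_mul_mk_X_one R, (mul_comm _ _).trans (mk_X_zero_mul_mk_X_one R)⟩

@[simp]
theorem quotientToLaurent_mk_X_zero : quotientToLaurent R (Ideal.Quotient.mk I (X 0)) = T 1 :=
  aeval_X _ 0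

@[simp]
theorem quotientToLaurent_mk_X_one : quotientToLaurent R (Ideal.Quotient.mk I (X 1)) = T (-1) :=
  aeval_X _ 1

@[simp]
theorem laurentToQuotient_T_one : laurentToQuotient R (T 1) = Ideal.Quotient.mk I (X 0) := by
  rw [laurentToQuotient, T, AddMonoidAlgebra.lift_single]
  simp

@[simp]
theorem laurentToQuotient_T_neg_one :
    laurentToQuotient R (T (-1)) = Ideal.Quotient.mk I (X 1) := by
  rw [laurentToQuotient, T, AddMonoidAlgebra.lift_single]
  simp

noncomputable def quotientEquivLaurent : (MvPolynomial (Fin 2) R ⧸ I) ≃ₐ[R] R[T;T⁻¹] :=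
  AlgEquiv.ofAlgHom (quotientToLaurent R) (laurentToQuotient R)
    (LaurentPolynomial.algHom_ext (by simp))
    (Ideal.Quotient.algHom_ext _ <| MvPolynomial.algHom_ext fun i => by fin_cases i <;> simp)

end MvPolynomial

open MvPolynomial in
/-- Consider the CDGA `D = ℚ[γ, γ̄] ⊗ E(y)` with `|γ| = 2`, `|γ̄| = −2`,
`|y| = 1` and differential `d(y) = γγ̄ − 1`, `d(γ) = d(γ̄) = 0`.  (We model the underlying
algebra as the dual numbers `R[y]/(y²)` over `R = ℚ[γ, γ̄]`, with `γ = X 0`, `γ̄ = X 1`, so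
that `d(r + s·y) = s·(γγ̄ − 1)`.)  Then the homology of `D` is the Laurent polynomial ring
`ℚ[β, β⁻¹]` with `|β| = 2` and `β` the class of `γ`: the cycles are exactly the even part
`R`, the boundaries are exactly the ideal `(γγ̄ − 1) ⊆ R`, and there is a `ℚ`-algebra
isomorphism `R/(γγ̄ − 1) ≅ ℚ[β, β⁻¹]` sending the class of `γ` to `β` (of degree `2`) and
the class of `γ̄` to `β⁻¹` (of degree `−2`). -/
theorem homology_of_KU_cell (d : DualNumber (MvPolynomial (Fin 2) ℚ) →ₗ[ℚ]
      DualNumber (MvPolynomial (Fin 2) ℚ))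
    (hd : ∀ x : DualNumber (MvPolynomial (Fin 2) ℚ),
      d x = TrivSqZeroExt.inl (x.snd * (X 0 * X 1 - 1))) :
    (∀ x : DualNumber (MvPolynomial (Fin 2) ℚ), d x = 0 ↔ x.snd = 0) ∧
    (∀ x : DualNumber (MvPolynomial (Fin 2) ℚ), (∃ b, d b = x) ↔
      (x.snd = 0 ∧ x.fst ∈ Ideal.span {(X 0 * X 1 - 1 : MvPolynomial (Fin 2) ℚ)})) ∧
    ∃ e : (MvPolynomial (Fin 2) ℚ ⧸
        Ideal.span {(X 0 * X 1 - 1 : MvPolynomial (Fin 2) ℚ)}) ≃ₐ[ℚ] LaurentPolynomial ℚ,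
      e (Ideal.Quotient.mk _ (X 0)) = LaurentPolynomial.T 1 ∧
      e (Ideal.Quotient.mk _ (X 1)) = LaurentPolynomial.T (-1) := by
  have hp : (X 0 * X 1 - 1 : MvPolynomial (Fin 2) ℚ) ∈ (MvPolynomial (Fin 2) ℚ)⁰ :=
    mem_nonZeroDivisors_of_ne_zero fun h => by simpa using congrArg constantCoeff h
  have hd' : ⇑d = koszulDiff (X 0 * X 1 - 1) := funext hd
  rw [hd']
  exact ⟨koszulDiff_eq_zero_iff hp, exists_koszulDiff_eq_iff _, quotientEquivLaurent ℚ,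
    quotientToLaurent_mk_X_zero ℚ, quotientToLaurent_mk_X_one ℚ⟩
end

section
/- Let p be a prime and k ≥ 1. Consider the CDGA B over ℚ given by ℚ[x₁,…,x_k] ⊗ E(t₁,…,t_k) with all x_i in degree 0, all t_i in degree 1, and differential determined by d(t₁) = Φ_p(x₁) and d(t_r) = x_{r−1} − x_r^p for 2 ≤ r ≤ k. Then H_i(B) = 0 for i ≠ 0 and H_0(B) ≅ ℚ(ζ_{p^k}). -/
/-!
The relations form a regular sequence. Modulo the first `j + 1` of them, `x_l ≡ x_j ^ p ^ (j - l)`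
for `l ≤ j` and `Φ_{p^(j+1)}(x_j) ≡ 0`, and sending `x_l ↦ ζ ^ p ^ (j - l)` (for `l ≤ j`, with `ζ` a
primitive `p^(j+1)`-th root of unity) identifies the quotient with a polynomial ring over
`ℚ(ζ)` in the remaining variables: a domain, in which the next relation `ζ - x_{j+1} ^ p` is
nonzero. For `j + 1 = k` the same substitution gives `H₀ ≅ ℚ(ζ_{p^k})`.

For a regular sequence the Koszul complex is acyclic in positive degrees, by induction on the
number of generators: a cycle built from the first `j + 1` generators is `e_j ∧ a + b` with `a`,
`b` built from the first `j`. Then `a` is a cycle, hence a boundary `d c` (by induction, or in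
degree `0` because `r_j a` is a boundary and `r_j` is regular), and `x + d (e_j ∧ c)` is a cycle
built from the first `j` generators.
-/

namespace Koszul

open ExteriorAlgebra CliffordAlgebra

section Module

variable {A M : Type*} [CommRing A] [AddCommGroup M] [Module A M]

lemma ι_mul_mem_pow {S : Submodule A M} {m : M} (hm : m ∈ S) {i : ℕ}
    {x : ExteriorAlgebra A M} (hx : x ∈ S.map (ι A) ^ i) :
    ι A m * x ∈ S.map (ι A) ^ (i + 1) := by
  rw [pow_succ']
  exact Submodule.mul_mem_mul ⟨m, hm, rfl⟩ hx

lemma contractLeft_mem_pow (φ : Module.Dual A M) {S : Submodule A M} {i : ℕ}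
    {x : ExteriorAlgebra A M} (hx : x ∈ S.map (ι A) ^ i) :
    contractLeft φ x ∈ S.map (ι A) ^ (i - 1) := by
  induction hx using Submodule.pow_induction_on_left' with
  | algebraMap r => simp
  | add x y i _ _ hx hy => rw [map_add]; exact add_mem hx hy
  | mem_mul m hm i x hx ih =>
    obtain ⟨v, hv, rfl⟩ := hm
    rw [contractLeft_ι_mul]
    refine sub_mem (Submodule.smul_mem _ _ (by simpa using hx)) ?_
    cases i with
    | zero =>
      obtain ⟨r, rfl⟩ := Submodule.mem_one.mp (pow_zero (S.map (ι A)) ▸ hx)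
      simp
    | succ i => simpa using ι_mul_mem_pow hv ih

lemma contractLeft_eq_zero_of_mem_pow {δ : Module.Dual A M} {S : Submodule A M}
    (hδ : ∀ m ∈ S, δ m = 0) {i : ℕ} {x : ExteriorAlgebra A M} (hx : x ∈ S.map (ι A) ^ i) :
    contractLeft δ x = 0 := by
  induction hx using Submodule.pow_induction_on_left' with
  | algebraMap r => simp
  | add x y i _ _ hx hy => rw [map_add, hx, hy, add_zero]
  | mem_mul m hm i x hx ih =>
    obtain ⟨v, hv, rfl⟩ := hm
    rw [contractLeft_ι_mul, ih, mul_zero, sub_zero, hδ v hv, zero_smul]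

end Module

variable {A : Type*} [CommRing A] {k : ℕ}

variable (A k)

def supportBelow (j : ℕ) : Submodule A (Fin k → A) where
  carrier := {v | ∀ l : Fin k, j ≤ (l : ℕ) → v l = 0}
  add_mem' ha hb l hl := by simp [ha l hl, hb l hl]
  zero_mem' _ _ := rfl
  smul_mem' c _ hv l hl := by simp [hv l hl]

/-- `formsBelow A k j ^ i` is degree `i` of the Koszul complex on the first `j` generators. -/
abbrev formsBelow (j : ℕ) : Submodule A (ExteriorAlgebra A (Fin k → A)) :=
  (supportBelow A k j).map (ι A)

variable {A k}

lemma supportBelow_zero : supportBelow A k 0 = ⊥ :=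
  eq_bot_iff.2 fun _ hv => funext fun l => hv l l.val.zero_le

lemma supportBelow_of_le {j : ℕ} (hj : k ≤ j) : supportBelow A k j = ⊤ :=
  eq_top_iff.2 fun _ _ l hl => absurd l.isLt (hj.trans hl).not_gt

lemma supportBelow_mono {j j' : ℕ} (h : j ≤ j') : supportBelow A k j ≤ supportBelow A k j' :=
  fun _ hv l hl => hv l (h.trans hl)

lemma formsBelow_pow_mono {j j' : ℕ} (h : j ≤ j') (i : ℕ) :
    formsBelow A k j ^ i ≤ formsBelow A k j' ^ i :=
  pow_le_pow_left' (Submodule.map_mono (supportBelow_mono h)) i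

lemma single_mem_supportBelow {j : ℕ} (l : Fin k) (hl : (l : ℕ) < j) (a : A) :
    Pi.single l a ∈ supportBelow A k j := fun l' hl' => by
  rw [Pi.single_eq_of_ne]; rintro rfl; omega

lemma sub_smul_single_mem_supportBelow {j : ℕ} (hj : j < k) {v : Fin k → A}
    (hv : v ∈ supportBelow A k (j + 1)) :
    v - v ⟨j, hj⟩ • Pi.single ⟨j, hj⟩ 1 ∈ supportBelow A k j := fun l hl => by
  rcases eq_or_ne l ⟨j, hj⟩ with rfl | hne
  · simp
  · have : j + 1 ≤ (l : ℕ) := by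
      have : (l : ℕ) ≠ j := fun h => hne (Fin.ext h)
      omega
    simp [hv l this, hne]

lemma map_supportBelow_eq_span (φ : Module.Dual A (Fin k → A)) (j : ℕ) :
    (supportBelow A k j).map φ =
      Ideal.span ((fun l => φ (Pi.single l 1)) '' {l | (l : ℕ) < j}) := by
  refine le_antisymm ?_ (Ideal.span_le.2 ?_)
  · rintro _ ⟨v, hv, rfl⟩
    rw [← Finset.univ_sum_single v, map_sum]
    refine Ideal.sum_mem _ fun l _ => ?_
    by_cases hl : (l : ℕ) < j
    · rw [← mul_one (v l), ← smul_eq_mul, Pi.single_smul', map_smul]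
      exact Ideal.mul_mem_left _ _ (Ideal.subset_span ⟨l, hl, rfl⟩)
    · simp [hv l (not_lt.1 hl)]
  · rintro _ ⟨l, hl, rfl⟩
    exact ⟨_, single_mem_supportBelow l hl 1, rfl⟩

lemma exists_eq_ι_single_mul_add {j : ℕ} (hj : j < k) {i : ℕ}
    {x : ExteriorAlgebra A (Fin k → A)} (hx : x ∈ formsBelow A k (j + 1) ^ (i + 1)) :
    ∃ a ∈ formsBelow A k j ^ i, ∃ b ∈ formsBelow A k j ^ (i + 1),
      x = ι A (Pi.single ⟨j, hj⟩ 1 : Fin k → A) * a + b := by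
  set e := ι A (Pi.single ⟨j, hj⟩ 1 : Fin k → A)
  have hsplit : ∀ v ∈ supportBelow A k (j + 1),
      ∃ w ∈ supportBelow A k j, ι A v = v ⟨j, hj⟩ • e + ι A w :=
    fun v hv => ⟨_, sub_smul_single_mem_supportBelow hj hv, by rw [map_sub, map_smul]; abel⟩
  induction i generalizing x with
  | zero =>
    rw [zero_add, pow_one] at hx
    obtain ⟨v, hv, rfl⟩ := hx
    obtain ⟨w, hw, hvw⟩ := hsplit v hv
    refine ⟨algebraMap A _ (v ⟨j, hj⟩), ?_, ι A w,
      by simpa using Submodule.mem_map_of_mem (f := ι A) hw, ?_⟩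
    · rw [pow_zero]; exact Submodule.algebraMap_mem _
    · rw [hvw, Algebra.smul_def, Algebra.commutes]
  | succ i ih =>
    rw [pow_succ'] at hx
    induction hx using Submodule.mul_induction_on' with
    | mem_mul_mem m hm y hy =>
      obtain ⟨v, hv, rfl⟩ := hm
      obtain ⟨w, hw, hvw⟩ := hsplit v hv
      obtain ⟨a, ha, b, hb, rfl⟩ := ih hy
      refine ⟨v ⟨j, hj⟩ • b - ι A w * a, sub_mem (Submodule.smul_mem _ _ hb) (ι_mul_mem_pow hw ha),
        ι A w * b, ι_mul_mem_pow hw hb, ?_⟩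
      have hee : e * e = 0 := ι_sq_zero _
      have hwe : ι A w * e = -(e * ι A w) := eq_neg_of_add_eq_zero_left (ι_add_mul_swap _ _)
      rw [hvw, add_mul, mul_add, mul_add, smul_mul_assoc, smul_mul_assoc, ← mul_assoc e e, hee,
        ← mul_assoc (ι A w) e, hwe, mul_sub, mul_smul_comm]
      simp only [zero_mul, smul_zero, neg_mul, mul_assoc]
      abel
    | add x y _ _ hx hy =>
      obtain ⟨a, ha, b, hb, rfl⟩ := hx
      obtain ⟨a', ha', b', hb', rfl⟩ := hy
      exact ⟨a + a', add_mem ha ha', b + b', add_mem hb hb', by rw [mul_add]; abel⟩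

lemma eq_zero_of_ι_single_mul_add_eq_zero {j : ℕ} (hj : j < k) {m n : ℕ}
    {a b : ExteriorAlgebra A (Fin k → A)} (ha : a ∈ formsBelow A k j ^ m)
    (hb : b ∈ formsBelow A k j ^ n) (h : ι A (Pi.single ⟨j, hj⟩ 1 : Fin k → A) * a + b = 0) :
    a = 0 := by
  have hδ : ∀ v ∈ supportBelow A k j, LinearMap.proj (R := A) (⟨j, hj⟩ : Fin k) v = 0 :=
    fun v hv => hv _ le_rfl
  have := congrArg (contractLeft (LinearMap.proj ⟨j, hj⟩)) h
  rwa [map_add, contractLeft_ι_mul, contractLeft_eq_zero_of_mem_pow hδ ha,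
    contractLeft_eq_zero_of_mem_pow hδ hb, LinearMap.proj_apply, Pi.single_eq_same, one_smul,
    mul_zero, sub_zero, add_zero, map_zero] at this

lemma exists_contractLeft_eq_algebraMap (φ : Module.Dual A (Fin k → A)) {j : ℕ} (hj : j < k)
    (hreg : ∀ a, φ (Pi.single ⟨j, hj⟩ 1) * a ∈ (supportBelow A k j).map φ →
      a ∈ (supportBelow A k j).map φ)
    {a : A} {b : ExteriorAlgebra A (Fin k → A)} (hb : b ∈ formsBelow A k j)
    (h : φ (Pi.single ⟨j, hj⟩ 1) • algebraMap A _ a + contractLeft φ b = 0) :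
    ∃ c ∈ formsBelow A k j ^ 1, contractLeft φ c = algebraMap A _ a := by
  obtain ⟨u, hu, rfl⟩ := hb
  rw [contractLeft_ι, Algebra.smul_def, ← map_mul, ← map_add,
    ← map_zero (algebraMap A (ExteriorAlgebra A (Fin k → A)))] at h
  obtain ⟨w, hw, hwa⟩ := hreg a ⟨-u, neg_mem hu, by
    rw [map_neg, ← eq_neg_of_add_eq_zero_left ((algebraMap_leftInverse _).injective h)]⟩
  exact ⟨ι A w, by simpa using Submodule.mem_map_of_mem (f := ι A) hw,
    by rw [contractLeft_ι, hwa]⟩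

lemma exists_contractLeft_eq_of_mem_pow_succ (φ : Module.Dual A (Fin k → A)) {j : ℕ} (hj : j < k)
    (hreg : ∀ a, φ (Pi.single ⟨j, hj⟩ 1) * a ∈ (supportBelow A k j).map φ →
      a ∈ (supportBelow A k j).map φ)
    (ih : ∀ i, ∀ x ∈ formsBelow A k j ^ (i + 1), contractLeft φ x = 0 →
      ∃ y ∈ formsBelow A k j ^ (i + 2), contractLeft φ y = x)
    {i : ℕ} {x : ExteriorAlgebra A (Fin k → A)} (hx : x ∈ formsBelow A k (j + 1) ^ (i + 1))
    (hdx : contractLeft φ x = 0) :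
    ∃ y ∈ formsBelow A k (j + 1) ^ (i + 2), contractLeft φ y = x := by
  obtain ⟨a, ha, b, hb, rfl⟩ := exists_eq_ι_single_mul_add hj hx
  set v : Fin k → A := Pi.single ⟨j, hj⟩ 1
  have hd : ∀ c, contractLeft φ (ι A v * c) = φ v • c - ι A v * contractLeft φ c :=
    fun c => contractLeft_ι_mul _ _ _
  rw [map_add, hd] at hdx
  have hda : contractLeft φ a = 0 := by
    refine neg_eq_zero.1 (eq_zero_of_ι_single_mul_add_eq_zero hj
      (neg_mem (contractLeft_mem_pow φ ha))
      (add_mem (Submodule.smul_mem _ (φ v) ha) (contractLeft_mem_pow φ hb)) ?_)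
    rw [← hdx]; simp only [mul_neg]; abel
  rw [hda, mul_zero, sub_zero] at hdx
  obtain ⟨c, hc, rfl⟩ : ∃ c ∈ formsBelow A k j ^ (i + 1), contractLeft φ c = a := by
    cases i with
    | succ i => exact ih i a ha hda
    | zero =>
      obtain ⟨a₀, rfl⟩ := Submodule.mem_one.mp (pow_zero (formsBelow A k j) ▸ ha)
      exact exists_contractLeft_eq_algebraMap φ hj hreg (by simpa using hb) hdx
  obtain ⟨y, hy, hdy⟩ := ih i (b + φ v • c) (add_mem hb (Submodule.smul_mem _ _ hc))
    (by rwa [map_add, map_smul, add_comm])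
  have hv : v ∈ supportBelow A k (j + 1) := single_mem_supportBelow _ (Nat.lt_succ_self j) 1
  refine ⟨y - ι A v * c, sub_mem (formsBelow_pow_mono j.le_succ _ hy)
    (ι_mul_mem_pow hv (formsBelow_pow_mono j.le_succ _ hc)), ?_⟩
  rw [map_sub, hdy, hd]
  abel

theorem exists_contractLeft_eq_of_contractLeft_eq_zero (φ : Module.Dual A (Fin k → A))
    (hreg : ∀ (j : Fin k) (a : A),
      φ (Pi.single j 1) * a ∈ Ideal.span ((fun l => φ (Pi.single l 1)) '' {l | l < j}) →
        a ∈ Ideal.span ((fun l => φ (Pi.single l 1)) '' {l | l < j}))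
    {i : ℕ} (hi : i ≠ 0) {x : ExteriorAlgebra A (Fin k → A)}
    (hx : x ∈ LinearMap.range (ι A) ^ i) (hdx : contractLeft φ x = 0) :
    ∃ y ∈ LinearMap.range (ι A) ^ (i + 1), contractLeft φ y = x := by
  have key : ∀ j ≤ k, ∀ i, ∀ x ∈ formsBelow A k j ^ (i + 1), contractLeft φ x = 0 →
      ∃ y ∈ formsBelow A k j ^ (i + 2), contractLeft φ y = x := by
    intro j
    induction j with
    | zero =>
      intro _ i x hx _
      rw [formsBelow, supportBelow_zero, Submodule.map_bot, ← Submodule.zero_eq_bot,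
        zero_pow i.succ_ne_zero, Submodule.zero_eq_bot, Submodule.mem_bot] at hx
      exact ⟨0, zero_mem _, by rw [hx, map_zero]⟩
    | succ j ih =>
      intro hj i x
      refine exists_contractLeft_eq_of_mem_pow_succ φ hj ?_ (ih (Nat.le_of_succ_le hj))
      rw [map_supportBelow_eq_span]
      exact hreg ⟨j, hj⟩
  obtain ⟨i, rfl⟩ := Nat.exists_eq_succ_of_ne_zero hi
  have hrange : LinearMap.range (ι A) = formsBelow A k k := by
    rw [formsBelow, supportBelow_of_le le_rfl, Submodule.map_top]
  rw [hrange] at hx ⊢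
  exact key k le_rfl i x hx hdx

lemma range_eq_span_single (φ : Module.Dual A (Fin k → A)) :
    LinearMap.range φ = Ideal.span (Set.range fun l => φ (Pi.single l 1)) := by
  rw [LinearMap.range_eq_map, ← (Pi.basisFun A (Fin k)).span_eq, Submodule.map_span,
    ← Set.range_comp]
  simp [Function.comp_def, Ideal.span]

theorem map_contractLeft_range_ι (φ : Module.Dual A (Fin k → A)) :
    (LinearMap.range (ι A) ^ 1).map (contractLeft φ) =
      (LinearMap.range φ).map (Algebra.linearMap A (ExteriorAlgebra A (Fin k → A))) := by
  rw [pow_one, LinearMap.range_eq_map, LinearMap.range_eq_map, ← Submodule.map_comp,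
    ← Submodule.map_comp]
  congr 1
  ext v
  simp [contractLeft_ι]

end Koszul

lemma Ideal.ker_eq_of_comp_eq_mk {R S : Type*} [CommRing R] [Semiring S] {I : Ideal R}
    {f : R →+* S} (g : S →+* R ⧸ I) (hI : I ≤ RingHom.ker f)
    (hgf : g.comp f = Ideal.Quotient.mk I) : RingHom.ker f = I :=
  le_antisymm (fun x hx => by
    rw [← Ideal.Quotient.eq_zero_iff_mem, ← hgf, RingHom.comp_apply, RingHom.mem_ker.1 hx,
      map_zero]) hI

theorem Polynomial.expand_prime_pow_cyclotomic {p : ℕ} (hp : p.Prime) (R : Type*) [CommRing R]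
    (n : ℕ) : expand R (p ^ n) (cyclotomic p R) = cyclotomic (p ^ (n + 1)) R := by
  induction n with
  | zero => simp
  | succ n ih =>
    rw [pow_succ', ← expand_expand, ih,
      cyclotomic_expand_eq_cyclotomic hp (dvd_pow_self p n.succ_ne_zero), ← pow_succ]

/- Instance search equips `CyclotomicField m ℚ` with `DivisionRing.toRatAlgebra`, not with the
`Algebra ℚ` structure that Mathlib's `IsCyclotomicExtension` instance is stated for. -/
instance CyclotomicField.isCyclotomicExtension_rat (m : ℕ) [NeZero m] :
    IsCyclotomicExtension {m} ℚ (CyclotomicField m ℚ) :=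
  CyclotomicField.isCyclotomicExtension m ℚ

namespace CyclotomicTower

open MvPolynomial

noncomputable def towerRel (p k : ℕ) (i : Fin k) : MvPolynomial (Fin k) ℚ :=
  if h : (i : ℕ) = 0 then Polynomial.aeval (X i) (Polynomial.cyclotomic p ℚ)
  else X ⟨i - 1, by omega⟩ - X i ^ p

noncomputable def towerIdeal (p k j : ℕ) : Ideal (MvPolynomial (Fin k) ℚ) :=
  Ideal.span (towerRel p k '' {l | (l : ℕ) < j})

variable {p k : ℕ}

lemma towerRel_zero (hk : 0 < k) :
    towerRel p k ⟨0, hk⟩ = Polynomial.aeval (X ⟨0, hk⟩) (Polynomial.cyclotomic p ℚ) :=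
  dif_pos rfl

lemma towerRel_succ {l : ℕ} (hl : l + 1 < k) :
    towerRel p k ⟨l + 1, hl⟩ = X ⟨l, by omega⟩ - X ⟨l + 1, hl⟩ ^ p :=
  dif_neg l.succ_ne_zero

lemma towerRel_mem_towerIdeal {j : ℕ} (l : Fin k) (hl : (l : ℕ) < j) :
    towerRel p k l ∈ towerIdeal p k j :=
  Ideal.subset_span ⟨l, hl, rfl⟩

lemma towerIdeal_zero : towerIdeal p k 0 = ⊥ := by
  simp [towerIdeal]

lemma towerIdeal_self : towerIdeal p k k = Ideal.span (Set.range (towerRel p k)) := by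
  simp [towerIdeal]

lemma mk_X_eq_mk_X_pow {n : ℕ} (hn : n < k) (m : ℕ) {l : ℕ} (hl : l + m = n) :
    Ideal.Quotient.mk (towerIdeal p k (n + 1)) (X ⟨l, by omega⟩) =
      Ideal.Quotient.mk (towerIdeal p k (n + 1)) (X ⟨n, hn⟩) ^ p ^ m := by
  induction m generalizing l with
  | zero => simp [← hl]
  | succ m ih =>
    have hrel := towerRel_mem_towerIdeal (p := p) (j := n + 1) (⟨l + 1, by omega⟩ : Fin k)
      (show l + 1 < n + 1 by omega)
    rw [towerRel_succ, ← Ideal.Quotient.eq] at hrel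
    rw [hrel, map_pow, ih (by omega), ← pow_mul, ← pow_succ]

lemma aeval_mk_X_cyclotomic [Fact p.Prime] {n : ℕ} (hn : n < k) :
    Polynomial.aeval (Ideal.Quotient.mk (towerIdeal p k (n + 1)) (X ⟨n, hn⟩))
      (Polynomial.cyclotomic (p ^ (n + 1)) ℚ) = 0 := by
  rw [← Polynomial.expand_prime_pow_cyclotomic Fact.out, Polynomial.expand_aeval,
    ← mk_X_eq_mk_X_pow hn n (zero_add n), ← Ideal.Quotient.mkₐ_eq_mk ℚ,
    Polynomial.aeval_algHom_apply, ← towerRel_zero, Ideal.Quotient.mkₐ_eq_mk,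
    Ideal.Quotient.eq_zero_iff_mem]
  exact towerRel_mem_towerIdeal _ (Nat.succ_pos n)

noncomputable abbrev towerZeta (p : ℕ) [Fact p.Prime] (n : ℕ) : CyclotomicField (p ^ (n + 1)) ℚ :=
  IsCyclotomicExtension.zeta (p ^ (n + 1)) ℚ _

lemma isPrimitiveRoot_towerZeta [Fact p.Prime] (n : ℕ) :
    IsPrimitiveRoot (towerZeta p n) (p ^ (n + 1)) :=
  IsCyclotomicExtension.zeta_spec _ _ _

lemma aeval_towerZeta_cyclotomic [Fact p.Prime] (n : ℕ) :
    Polynomial.aeval (towerZeta p n) (Polynomial.cyclotomic (p ^ (n + 1)) ℚ) = 0 := by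
  rw [Polynomial.cyclotomic_eq_minpoly_rat (isPrimitiveRoot_towerZeta n) (NeZero.pos _),
    minpoly.aeval]

noncomputable def towerLift [Fact p.Prime] {n : ℕ} (hn : n < k) :
    CyclotomicField (p ^ (n + 1)) ℚ →ₐ[ℚ] MvPolynomial (Fin k) ℚ ⧸ towerIdeal p k (n + 1) :=
  ((isPrimitiveRoot_towerZeta n).powerBasis ℚ).lift (Ideal.Quotient.mk _ (X ⟨n, hn⟩)) <| by
    rw [IsPrimitiveRoot.powerBasis_gen,
      ← Polynomial.cyclotomic_eq_minpoly_rat (isPrimitiveRoot_towerZeta n) (NeZero.pos _)]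
    exact aeval_mk_X_cyclotomic hn

lemma towerLift_towerZeta [Fact p.Prime] {n : ℕ} (hn : n < k) :
    towerLift hn (towerZeta p n) = Ideal.Quotient.mk (towerIdeal p k (n + 1)) (X ⟨n, hn⟩) :=
  PowerBasis.lift_gen _ _ _

lemma towerLift_towerZeta_pow [Fact p.Prime] {n : ℕ} (hn : n < k) {l : ℕ}
    (hl : l ≤ n) :
    towerLift hn (towerZeta p n ^ p ^ (n - l)) =
      Ideal.Quotient.mk (towerIdeal p k (n + 1)) (X ⟨l, by omega⟩) := by
  rw [map_pow, towerLift_towerZeta]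
  exact (mk_X_eq_mk_X_pow hn (n - l) (by omega)).symm

lemma towerIdeal_le_ker_aeval [Fact p.Prime] {T : Type*} [CommRing T] [Algebra ℚ T] {n : ℕ}
    {u : T} (hu : Polynomial.aeval u (Polynomial.cyclotomic (p ^ (n + 1)) ℚ) = 0)
    {g : Fin k → T} (hg : ∀ l : Fin k, (l : ℕ) ≤ n → g l = u ^ p ^ (n - l)) :
    towerIdeal p k (n + 1) ≤ RingHom.ker (aeval g) := by
  rw [towerIdeal, Ideal.span_le]
  rintro _ ⟨⟨l, hlk⟩, hl, rfl⟩
  rw [SetLike.mem_coe, RingHom.mem_ker]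
  cases l with
  | zero =>
    rw [towerRel_zero, ← Polynomial.aeval_algHom_apply, aeval_X, hg _ n.zero_le,
      ← Polynomial.expand_aeval, Polynomial.expand_prime_pow_cyclotomic Fact.out, Nat.sub_zero]
    exact hu
  | succ l =>
    have hl : l < n := by simp at hl; omega
    rw [towerRel_succ, map_sub, map_pow, aeval_X, aeval_X, hg _ (by simp; omega),
      hg _ (by simp; omega), ← pow_mul, ← pow_succ, show n - l = n - (l + 1) + 1 by omega,
      sub_self]

noncomputable def towerEval [Fact p.Prime] (n : ℕ) :
    (MvPolynomial (Fin (n + 1)) ℚ ⧸ towerIdeal p (n + 1) (n + 1)) →ₐ[ℚ]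
      CyclotomicField (p ^ (n + 1)) ℚ :=
  Ideal.Quotient.liftₐ _ (aeval fun l => towerZeta p n ^ p ^ (n - l))
    fun _ ha => RingHom.mem_ker.1 <|
      towerIdeal_le_ker_aeval (aeval_towerZeta_cyclotomic n) (fun _ _ => rfl) ha

lemma towerEval_mk_X [Fact p.Prime] {n : ℕ} (l : Fin (n + 1)) :
    towerEval n (Ideal.Quotient.mk _ (X l)) = towerZeta p n ^ p ^ (n - l) :=
  aeval_X _ l

noncomputable def towerQuotientEquiv [Fact p.Prime] (n : ℕ) :
    (MvPolynomial (Fin (n + 1)) ℚ ⧸ towerIdeal p (n + 1) (n + 1)) ≃ₐ[ℚ]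
      CyclotomicField (p ^ (n + 1)) ℚ :=
  AlgEquiv.ofAlgHom (towerEval n) (towerLift n.lt_succ_self)
    (((isPrimitiveRoot_towerZeta n).powerBasis ℚ).algHom_ext <| by
      show towerEval n (towerLift _ (towerZeta p n)) = towerZeta p n
      rw [towerLift_towerZeta, towerEval_mk_X, Nat.sub_self, pow_zero, pow_one])
    (Ideal.Quotient.algHom_ext _ <| MvPolynomial.algHom_ext fun l => by
      show towerLift _ (towerEval n (Ideal.Quotient.mk _ (X l))) = Ideal.Quotient.mk _ (X l)
      rw [towerEval_mk_X, towerLift_towerZeta_pow _ (Nat.le_of_lt_succ l.isLt)])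

noncomputable def towerSubst [Fact p.Prime] (n : ℕ) :
    MvPolynomial (Fin k) ℚ →ₐ[ℚ] MvPolynomial (Fin k) (CyclotomicField (p ^ (n + 1)) ℚ) :=
  aeval fun l => if (l : ℕ) ≤ n then C (towerZeta p n ^ p ^ (n - l)) else X l

lemma ker_towerSubst [Fact p.Prime] {n : ℕ} (hn : n < k) :
    RingHom.ker (towerSubst (k := k) (p := p) n) = towerIdeal p k (n + 1) := by
  refine Ideal.ker_eq_of_comp_eq_mk
    (eval₂Hom (towerLift hn).toRingHom fun l => Ideal.Quotient.mk _ (X l)) ?_ ?_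
  · refine towerIdeal_le_ker_aeval (u := C (towerZeta p n)) ?_ fun l hl => ?_
    · rw [← MvPolynomial.algebraMap_eq, Polynomial.aeval_algebraMap_apply,
        aeval_towerZeta_cyclotomic, map_zero]
    · rw [if_pos hl, map_pow]
  · refine MvPolynomial.ringHom_ext' (Subsingleton.elim _ _) fun l => ?_
    show eval₂ _ _ (aeval _ (X l)) = _
    rw [aeval_X]
    split_ifs with hl
    · rw [eval₂_C]
      exact towerLift_towerZeta_pow hn hl
    · rw [eval₂_X]

lemma constantCoeff_towerSubst_towerRel [Fact p.Prime] {n : ℕ} (hn : n + 1 < k) :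
    constantCoeff (towerSubst n (towerRel p k ⟨n + 1, hn⟩)) = towerZeta p n := by
  rw [towerRel_succ, map_sub, map_pow, towerSubst, aeval_X, aeval_X, if_pos le_rfl,
    if_neg (by simp), Nat.sub_self, pow_zero, pow_one, map_sub, map_pow, constantCoeff_C,
    constantCoeff_X, zero_pow (Fact.out : p.Prime).ne_zero, sub_zero]

lemma towerRel_not_mem_towerIdeal [Fact p.Prime] (j : Fin k) :
    towerRel p k j ∉ towerIdeal p k j := by
  obtain ⟨_ | n, hj⟩ := j
  · rw [towerIdeal_zero, Ideal.mem_bot, towerRel_zero]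
    exact (map_ne_zero_iff _ (Polynomial.toMvPolynomial_injective _)).2
      (Polynomial.cyclotomic_ne_zero p ℚ)
  · rw [← ker_towerSubst (Nat.lt_of_succ_lt hj), RingHom.mem_ker]
    intro h
    have := constantCoeff_towerSubst_towerRel (p := p) hj
    rw [h, map_zero] at this
    exact (isPrimitiveRoot_towerZeta n).ne_zero (NeZero.ne _) this.symm

lemma isPrime_towerIdeal [Fact p.Prime] (j : Fin k) : (towerIdeal p k j).IsPrime := by
  obtain ⟨_ | n, hj⟩ := j
  · rw [towerIdeal_zero]; exact Ideal.isPrime_bot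
  · rw [← ker_towerSubst (Nat.lt_of_succ_lt hj)]; exact RingHom.ker_isPrime _

lemma mem_towerIdeal_of_towerRel_mul_mem [Fact p.Prime] (j : Fin k) {a : MvPolynomial (Fin k) ℚ}
    (h : towerRel p k j * a ∈ towerIdeal p k j) : a ∈ towerIdeal p k j :=
  ((isPrime_towerIdeal j).mem_or_mem h).resolve_left (towerRel_not_mem_towerIdeal j)

end CyclotomicTower

open MvPolynomial in
/-- Let `p` be a prime and `k ≥ 1`.  Consider the Koszul complex
`B = ℚ[x₁,…,x_k] ⊗ E(t₁,…,t_k)` on the sequence `(Φ_p(x₁), x₁ − x₂^p, …, x_{k−1} − x_k^p)`,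
with the `x_i` in degree `0`, the `t_i` in degree `1`, and differential determined by
`d(t₁) = Φ_p(x₁)` and `d(t_r) = x_{r−1} − x_r^p`.  (We model `B` as the exterior algebra
over `R = ℚ[x₁,…,x_k]` on the free module `M = R^k`, with degree-`i` piece the span of
`i`-fold products of generators, and with `d` the contraction against the dual element `φ`
sending the `i`-th exterior generator to the `i`-th relation.)  Then `H_i(B) = 0` for
`i ≠ 0`, the boundaries in degree `0` form the ideal generated by the relations, and
`H_0(B) ≅ ℚ(ζ_{p^k})`. -/
theorem koszul_complex_homology (p k : ℕ) (hp : p.Prime) (hk : 1 ≤ k)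
    (r : Fin k → MvPolynomial (Fin k) ℚ)
    (hr0 : ∀ i : Fin k, (i : ℕ) = 0 →
      r i = Polynomial.aeval (X i) (Polynomial.cyclotomic p ℚ))
    (hrs : ∀ i : Fin k, ∀ _ : 0 < (i : ℕ),
      r i = X (⟨(i : ℕ) - 1, lt_of_le_of_lt (Nat.sub_le _ _) i.isLt⟩ : Fin k) - X i ^ p)
    (φ : Module.Dual (MvPolynomial (Fin k) ℚ) (Fin k → MvPolynomial (Fin k) ℚ))
    (hφ : ∀ m : Fin k → MvPolynomial (Fin k) ℚ, φ m = ∑ i, m i * r i) :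
    -- vanishing of the homology of the Koszul complex in nonzero degrees:
    (∀ i : ℕ, i ≠ 0 →
      ∀ x ∈ (LinearMap.range (ExteriorAlgebra.ι (MvPolynomial (Fin k) ℚ) :
          (Fin k → MvPolynomial (Fin k) ℚ) →ₗ[MvPolynomial (Fin k) ℚ] _)) ^ i,
        CliffordAlgebra.contractLeft φ x = 0 →
          ∃ y ∈ (LinearMap.range (ExteriorAlgebra.ι (MvPolynomial (Fin k) ℚ) :
              (Fin k → MvPolynomial (Fin k) ℚ) →ₗ[MvPolynomial (Fin k) ℚ] _)) ^ (i + 1),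
            CliffordAlgebra.contractLeft φ y = x) ∧
    -- the boundaries in degree `0` are the ideal generated by the relations:
    (Submodule.map (CliffordAlgebra.contractLeft φ)
        ((LinearMap.range (ExteriorAlgebra.ι (MvPolynomial (Fin k) ℚ) :
          (Fin k → MvPolynomial (Fin k) ℚ) →ₗ[MvPolynomial (Fin k) ℚ] _)) ^ 1) =
      Submodule.map
        (Algebra.linearMap (MvPolynomial (Fin k) ℚ)
          (ExteriorAlgebra (MvPolynomial (Fin k) ℚ) (Fin k → MvPolynomial (Fin k) ℚ)))
        (Ideal.span (Set.range r))) ∧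
    -- `H₀` is the cyclotomic field `ℚ(ζ_{p^k})`:
    (haveI : NeZero (p ^ k) := ⟨(pow_pos hp.pos k).ne'⟩
    Nonempty ((MvPolynomial (Fin k) ℚ ⧸ Ideal.span (Set.range r)) ≃ₐ[ℚ]
      CyclotomicField (p ^ k) ℚ)) := by
  have : Fact p.Prime := ⟨hp⟩
  have hr : r = CyclotomicTower.towerRel p k := funext fun i => by
    by_cases h : (i : ℕ) = 0
    · rw [hr0 i h, CyclotomicTower.towerRel, dif_pos h]
    · rw [hrs i (Nat.pos_of_ne_zero h), CyclotomicTower.towerRel, dif_neg h]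
  have hφr : ∀ l, φ (Pi.single l 1) = r l := fun l => by simp [hφ, Pi.single_apply]
  subst hr
  refine ⟨fun i hi x hx hdx =>
    Koszul.exists_contractLeft_eq_of_contractLeft_eq_zero φ ?_ hi hx hdx, ?_, ?_⟩
  · simp only [hφr]
    exact fun j _ => CyclotomicTower.mem_towerIdeal_of_towerRel_mul_mem j
  · simp only [Koszul.map_contractLeft_range_ι, Koszul.range_eq_span_single, hφr]
  · obtain ⟨n, rfl⟩ : ∃ n, k = n + 1 := ⟨k - 1, by omega⟩
    exact ⟨(Ideal.quotientEquivAlgOfEq ℚ CyclotomicTower.towerIdeal_self.symm).trans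
      (CyclotomicTower.towerQuotientEquiv n)⟩
end

section
/- Let R = ℚ[x₁,…,x_k] and let p be prime. The sequence (Φ_p(x₁), x₁ − x₂^p, x₂ − x₃^p, …, x_{k−1} − x_k^p) is a regular sequence in R. -/
/-!
Let `Iᵢ` be the ideal generated by the first `i + 1` relations and let `ζ` be the class of `t`
in the field `K = ℚ[t]/Φ_{p^{i+1}}`. Modulo `Iᵢ` we have `x_j = x_i ^ p^{i-j}` for
`j ≤ i`, so `x_i` is a root of `Φ_p(x^{p^i}) = Φ_{p^{i+1}}`. Hence the substitution
`x_j ↦ ζ ^ p^{i-j}` (`j ≤ i`) into the domain `K[x]` has kernel exactly `Iᵢ`: the map `ζ ↦ x_i`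
inverts it modulo `Iᵢ`. So every `Iᵢ` is prime, and the next relation `x_i - x_{i+1}^p` is not
in `Iᵢ` because it maps to `ζ - x_{i+1}^p ≠ 0`. A sequence whose partial ideals are prime and
whose terms avoid the preceding ideal is regular.
-/

open MvPolynomial

theorem Polynomial.expand_cyclotomic_prime_pow {p : ℕ} (hp : p.Prime) (R : Type*) [CommRing R]
    (m : ℕ) : expand R (p ^ m) (cyclotomic p R) = cyclotomic (p ^ (m + 1)) R := by
  induction m with
  | zero => simp
  | succ m ih =>
    rw [pow_succ', ← expand_expand, ih,
      cyclotomic_expand_eq_cyclotomic hp (dvd_pow_self p m.succ_ne_zero), ← pow_succ]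

instance Polynomial.fact_irreducible_cyclotomic_pow_rat {p : ℕ} [NeZero p] (m : ℕ) :
    Fact (Irreducible (cyclotomic (p ^ m) ℚ)) :=
  ⟨cyclotomic.irreducible_rat (pow_pos (NeZero.pos p) m)⟩

theorem Ideal.ofList_take_succ_ofFn {R : Type*} [CommSemiring R] {k : ℕ} (f : Fin k → R)
    (i : Fin k) : Ideal.ofList ((List.ofFn f).take (i + 1)) = Ideal.span (f '' Set.Iic i) := by
  unfold Ideal.ofList
  congr 1
  ext a
  simp only [Set.mem_ofPred_eq, Set.mem_image, Set.mem_Iic, List.mem_take_iff_getElem,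
    List.getElem_ofFn, List.length_ofFn]
  constructor
  · rintro ⟨j, hj, rfl⟩
    exact ⟨⟨j, by omega⟩, Fin.le_def.2 (by simp; omega), rfl⟩
  · rintro ⟨j, hj, rfl⟩
    exact ⟨j, by rw [Fin.le_def] at hj; omega, rfl⟩

theorem RingTheory.Sequence.isRegular_of_isPrime_ofList_take {R : Type*} [CommRing R]
    (rs : List R) (hprime : ∀ n ≤ rs.length, (Ideal.ofList (rs.take n)).IsPrime)
    (hnotMem : ∀ n (h : n < rs.length), rs[n] ∉ Ideal.ofList (rs.take n)) :
    IsRegular R rs := by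
  refine ⟨⟨fun n hn => ?_⟩, ?_⟩
  · rw [Ideal.smul_eq_mul, Ideal.mul_top, isSMulRegular_quotient_iff_mem_of_smul_mem]
    exact fun x hx => ((hprime n hn.le).mem_or_mem hx).resolve_left (hnotMem n hn)
  · rw [Ideal.smul_eq_mul, Ideal.mul_top, ne_comm, ← List.take_length (l := rs)]
    exact (hprime _ le_rfl).ne_top

noncomputable def cyclotomicTowerRel (p k : ℕ) : Fin k → MvPolynomial (Fin k) ℚ
  | ⟨0, h⟩ => Polynomial.aeval (X ⟨0, h⟩) (Polynomial.cyclotomic p ℚ)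
  | ⟨j + 1, h⟩ => X ⟨j, by omega⟩ - X ⟨j + 1, h⟩ ^ p

namespace cyclotomicTowerRel

variable {p k : ℕ}

noncomputable abbrev ideal (p : ℕ) (i : Fin k) : Ideal (MvPolynomial (Fin k) ℚ) :=
  Ideal.span (cyclotomicTowerRel p k '' Set.Iic i)

theorem mk_X_eq_pow (i : Fin k) : ∀ (d j : ℕ) (hj : j + d = i),
    Ideal.Quotient.mk (ideal p i) (X ⟨j, by omega⟩) = Ideal.Quotient.mk (ideal p i) (X i) ^ p ^ d
  | 0, j, hj => by rw [pow_zero, pow_one]; congr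
  | d + 1, j, hj => by
    have hrel : cyclotomicTowerRel p k ⟨j + 1, by omega⟩ ∈ ideal p i :=
      Ideal.subset_span ⟨_, Fin.le_def.2 (show j + 1 ≤ i by omega), rfl⟩
    rw [← Ideal.Quotient.eq_zero_iff_mem, cyclotomicTowerRel, map_sub, sub_eq_zero] at hrel
    rw [hrel, map_pow, mk_X_eq_pow i d (j + 1) (by omega), ← pow_mul, pow_succ]

theorem aeval_mk_X_cyclotomic (hp : p.Prime) (i : Fin k) :
    Polynomial.aeval (Ideal.Quotient.mk (ideal p i) (X i))
      (Polynomial.cyclotomic (p ^ ((i : ℕ) + 1)) ℚ) = 0 := by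
  rw [← Polynomial.expand_cyclotomic_prime_pow hp, Polynomial.expand_aeval,
    ← mk_X_eq_pow i i 0 (zero_add _), ← Ideal.Quotient.mkₐ_eq_mk ℚ,
    Polynomial.aeval_algHom_apply, Ideal.Quotient.mkₐ_eq_mk, Ideal.Quotient.eq_zero_iff_mem]
  exact Ideal.subset_span ⟨⟨0, _⟩, Fin.le_def.2 (Nat.zero_le _), rfl⟩

noncomputable def evalRoots (p : ℕ) (i : Fin k) :
    MvPolynomial (Fin k) ℚ →ₐ[ℚ]
      MvPolynomial (Fin k) (AdjoinRoot (Polynomial.cyclotomic (p ^ ((i : ℕ) + 1)) ℚ)) :=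
  aeval fun j => if j ≤ i then C (AdjoinRoot.root _ ^ p ^ ((i : ℕ) - j)) else X j

theorem evalRoots_eq_zero (hp : p.Prime) {i j : Fin k} (hj : j ≤ i) :
    evalRoots p i (cyclotomicTowerRel p k j) = 0 := by
  rcases j with ⟨_ | j, h⟩
  · simp only [cyclotomicTowerRel, evalRoots]
    rw [← Polynomial.aeval_algHom_apply, aeval_X, if_pos hj, Fin.val_mk, Nat.sub_zero,
      ← algebraMap_eq, Polynomial.aeval_algebraMap_apply, ← Polynomial.expand_aeval,
      Polynomial.expand_cyclotomic_prime_pow hp, AdjoinRoot.aeval_eq, AdjoinRoot.mk_self,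
      map_zero]
  · have hj' : (⟨j, by omega⟩ : Fin k) ≤ i := le_trans (Fin.le_def.2 (Nat.le_succ j)) hj
    simp only [cyclotomicTowerRel, evalRoots, map_sub, map_pow, aeval_X, if_pos hj, if_pos hj']
    rw [← map_pow, ← pow_mul, ← pow_succ, Nat.sub_add_eq,
      Nat.sub_add_cancel (Nat.sub_pos_of_lt hj), map_pow, sub_self]

theorem evalRoots_succ_ne_zero (hp : p.Prime) (i : Fin k) (hi : (i : ℕ) + 1 < k) :
    evalRoots p i (cyclotomicTowerRel p k ⟨i + 1, hi⟩) ≠ 0 := by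
  have : NeZero p := ⟨hp.ne_zero⟩
  have hlt : ¬(⟨i + 1, hi⟩ : Fin k) ≤ i := Fin.not_le.2 (Nat.lt_succ_self i)
  simp only [cyclotomicTowerRel, evalRoots, map_sub, map_pow, aeval_X, if_pos (le_refl i),
    if_neg hlt]
  intro h
  have := congrArg (coeff (Finsupp.single ⟨i + 1, hi⟩ p)) h
  simp [coeff_C, coeff_X_pow, (Finsupp.single_ne_zero.2 hp.ne_zero).symm] at this

theorem exists_comp_evalRoots_eq_mkₐ (hp : p.Prime) (i : Fin k) :
    ∃ ψ : MvPolynomial (Fin k) (AdjoinRoot (Polynomial.cyclotomic (p ^ ((i : ℕ) + 1)) ℚ)) →ₐ[ℚ]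
        MvPolynomial (Fin k) ℚ ⧸ ideal p i,
      ψ.comp (evalRoots p i) = Ideal.Quotient.mkₐ ℚ (ideal p i) := by
  let ζ := AdjoinRoot.liftAlgHom _ (Algebra.ofId ℚ (MvPolynomial (Fin k) ℚ ⧸ ideal p i))
    (Ideal.Quotient.mk _ (X i)) <| by
    rw [Algebra.toRingHom_ofId, ← Polynomial.aeval_def]; exact aeval_mk_X_cyclotomic hp i
  refine ⟨aevalTower ζ fun j => Ideal.Quotient.mk _ (X j), algHom_ext fun j => ?_⟩
  by_cases hj : j ≤ i
  · simp only [evalRoots, hj, ζ, AlgHom.comp_apply, aeval_X, if_pos, aevalTower_C, map_pow,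
      AdjoinRoot.liftAlgHom_root, Ideal.Quotient.mkₐ_eq_mk]
    exact (mk_X_eq_pow i (i - j) j (by omega)).symm
  · simp [evalRoots, hj]

theorem ker_evalRoots (hp : p.Prime) (i : Fin k) : RingHom.ker (evalRoots p i) = ideal p i := by
  obtain ⟨ψ, hψ⟩ := exists_comp_evalRoots_eq_mkₐ hp i
  refine le_antisymm (fun z hz => ?_) (Ideal.span_le.2 ?_)
  · rw [← Ideal.Quotient.eq_zero_iff_mem, ← Ideal.Quotient.mkₐ_eq_mk ℚ, ← hψ, AlgHom.comp_apply,
      RingHom.mem_ker.1 hz, map_zero]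
  · rintro _ ⟨j, hj, rfl⟩
    exact evalRoots_eq_zero hp hj

theorem isPrime_ideal (hp : p.Prime) (i : Fin k) : (ideal p i).IsPrime := by
  have : NeZero p := ⟨hp.ne_zero⟩
  exact ker_evalRoots hp i ▸ RingHom.ker_isPrime _

theorem succ_notMem_ideal (hp : p.Prime) (i : Fin k) (hi : (i : ℕ) + 1 < k) :
    cyclotomicTowerRel p k ⟨i + 1, hi⟩ ∉ ideal p i := by
  rw [← ker_evalRoots hp, RingHom.mem_ker]
  exact evalRoots_succ_ne_zero hp i hi

theorem apply_zero_ne_zero (h : 0 < k) : cyclotomicTowerRel p k ⟨0, h⟩ ≠ 0 :=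
  (map_ne_zero_iff _ (Polynomial.toMvPolynomial_injective _)).2
    (Polynomial.cyclotomic_ne_zero p ℚ)

end cyclotomicTowerRel

open MvPolynomial in
/-- For `R = ℚ[x₁,…,x_k]` and `p` prime, the sequence
`(Φ_p(x₁), x₁ − x₂^p, …, x_{k−1} − x_k^p)` is a regular sequence in `R`.
(Variables are indexed zero-based by `Fin k`.) -/
theorem koszul_relations_regular_sequence (p k : ℕ) (hp : p.Prime)
    (r : Fin k → MvPolynomial (Fin k) ℚ)
    (hr0 : ∀ i : Fin k, (i : ℕ) = 0 →
      r i = Polynomial.aeval (X i) (Polynomial.cyclotomic p ℚ))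
    (hrs : ∀ i : Fin k, ∀ _ : 0 < (i : ℕ),
      r i = X (⟨(i : ℕ) - 1, lt_of_le_of_lt (Nat.sub_le _ _) i.isLt⟩ : Fin k) - X i ^ p) :
    RingTheory.Sequence.IsRegular (MvPolynomial (Fin k) ℚ) (List.ofFn r) := by
  obtain rfl : r = cyclotomicTowerRel p k := funext fun
    | ⟨0, _⟩ => hr0 _ rfl
    | ⟨j + 1, _⟩ => hrs _ j.succ_pos
  refine RingTheory.Sequence.isRegular_of_isPrime_ofList_take _ (fun n hn => ?_) (fun n hn => ?_)
  all_goals rw [List.length_ofFn] at hn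
  · rcases n with _ | i
    · simpa using Ideal.isPrime_bot
    · rw [Ideal.ofList_take_succ_ofFn _ ⟨i, hn⟩]
      exact cyclotomicTowerRel.isPrime_ideal hp _
  · rcases n with _ | i
    · simpa using cyclotomicTowerRel.apply_zero_ne_zero hn
    · rw [List.getElem_ofFn, Ideal.ofList_take_succ_ofFn _ ⟨i, by omega⟩]
      exact cyclotomicTowerRel.succ_notMem_ideal hp ⟨i, _⟩ hn
end
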